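/- Suppose τ ∈ (0,1) and g is a horizontally valid two-dimensional move with g + gᵀ = t_τ. Then ĝ(α,β) ≤ 2 for all α, β ∈ [2,∞]. -/

import Mathlib

open scoped BigOperators Classical

noncomputable section

/-- The profile `P_x` of a point `x ∈ ℝ≥0`, viewed as a function on `[1,∞]`
(the extended reals `EReal` model the interval with its point `∞ = ⊤`):
`P_x(α) = 1` for `α ∈ [1,2)`, `P_x(α) = (xα - x)/(x + α - 2)` for `α ∈ [2,∞)`,
and `P_x(∞) = x` (with the conventions `P_0(α) = 0` for `α ∈ [2,∞]`, which the
formula also yields since division by zero is zero). -/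
def Pfun (x : ℝ) (α : EReal) : ℝ :=
  if α = ⊤ then x
  else if α.toReal < 2 then 1
  else (x * α.toReal - x) / (x + α.toReal - 2)

/-- A one-dimensional move: a finitely supported function on `ℝ≥0`
(modeled as a function on `ℝ` vanishing on the negatives). -/
def IsMove1 (f : ℝ → ℝ) : Prop :=
  (Function.support f).Finite ∧ ∀ x : ℝ, x < 0 → f x = 0

/-- Validity of a one-dimensional move. -/
def IsValid1 (f : ℝ → ℝ) : Prop :=
  (∑ᶠ x, f x) = 0 ∧
  (∀ lam : ℝ, 0 < lam → 0 ≤ ∑ᶠ x, (x / (x + lam)) * f x) ∧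
  0 ≤ ∑ᶠ x, x * f x

/-- The profile of a one-dimensional move. -/
def prof1 (f : ℝ → ℝ) (α : EReal) : ℝ := ∑ᶠ x, f x * Pfun x α

/-- A two-dimensional move: a finitely supported function on `ℝ≥0 × ℝ≥0`. -/
def IsMove2 (q : ℝ × ℝ → ℝ) : Prop :=
  (Function.support q).Finite ∧ ∀ p : ℝ × ℝ, p.1 < 0 ∨ p.2 < 0 → q p = 0

/-- A two-dimensional move is horizontally valid if all of its rows are valid. -/
def HorizValid (q : ℝ × ℝ → ℝ) : Prop := ∀ y : ℝ, IsValid1 fun x => q (x, y)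

/-- A two-dimensional move is vertically valid if all of its columns are valid. -/
def VertValid (q : ℝ × ℝ → ℝ) : Prop := ∀ x : ℝ, IsValid1 fun y => q (x, y)

/-- The two-variable profile of a two-dimensional move. -/
def prof2 (q : ℝ × ℝ → ℝ) (α β : EReal) : ℝ :=
  ∑ᶠ p : ℝ × ℝ, q p * Pfun p.1 α * Pfun p.2 β

/-- The transpose move `qᵀ(x,y) = q(y,x)`. -/
def transpose (q : ℝ × ℝ → ℝ) : ℝ × ℝ → ℝ := fun p => q (p.2, p.1)

/-- `pt x y` is the indicator move `⟦x,y⟧`. -/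
def pt (x y : ℝ) : ℝ × ℝ → ℝ := fun p => if p = (x, y) then 1 else 0

/-- The move `t_τ = 2·⟦1,1⟧ - ⟦2-τ,0⟧ - ⟦0,2-τ⟧`. -/
def tMove (τ : ℝ) : ℝ × ℝ → ℝ :=
  fun p => 2 * pt 1 1 p - pt (2 - τ) 0 p - pt 0 (2 - τ) p

/-- `slice g b` is the move `g_b`: the part of `g` on the horizontal line `y = b`. -/
def hslice (g : ℝ × ℝ → ℝ) (b : ℝ) : ℝ × ℝ → ℝ := fun p => if p.2 = b then g p else 0

/-!
Because `P_0 = 0` and `P_1 = 1` on `[2,∞]`, the profile of `t_τ` is constantly `2` there, so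
`ĝ(α,β) + ĝ(β,α) = 2`. Horizontal validity makes `ĝ` nonnegative on `[2,∞]²`: for finite `α`,
`P_x(α) = (α - 1) · x / (x + (α - 2))`, so every row profile is a positive multiple of a
validity sum with `λ = α - 2` (the case `λ = 0` following by letting `λ → 0⁺`), at `α = ∞` it is
the first-moment condition, and `P_y(β) ≥ 0`.
-/

open Filter Function Topology

section Pfun

variable {α : EReal}

lemma two_le_toReal_of_ne_top (hα : ((2 : ℝ) : EReal) ≤ α) (htop : α ≠ ⊤) : 2 ≤ α.toReal := by
  simpa using EReal.toReal_le_toReal hα (by simp) htop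

lemma Pfun_of_ne_top (hα : ((2 : ℝ) : EReal) ≤ α) (htop : α ≠ ⊤) (x : ℝ) :
    Pfun x α = (α.toReal - 1) * (x / (x + (α.toReal - 2))) := by
  rw [Pfun, if_neg htop, if_neg (two_le_toReal_of_ne_top hα htop).not_gt]
  ring

lemma Pfun_top (x : ℝ) : Pfun x ⊤ = x := if_pos rfl

lemma Pfun_zero (hα : ((2 : ℝ) : EReal) ≤ α) : Pfun 0 α = 0 := by
  by_cases htop : α = ⊤
  · rw [htop, Pfun_top]
  · simp [Pfun_of_ne_top hα htop]

lemma Pfun_one (hα : ((2 : ℝ) : EReal) ≤ α) : Pfun 1 α = 1 := by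
  by_cases htop : α = ⊤
  · rw [htop, Pfun_top]
  · have h2 := two_le_toReal_of_ne_top hα htop
    rw [Pfun_of_ne_top hα htop, show (1 : ℝ) + (α.toReal - 2) = α.toReal - 1 by ring, one_div,
      mul_inv_cancel₀ (sub_pos.2 (by linarith)).ne']

lemma Pfun_nonneg {x : ℝ} (hx : 0 ≤ x) (hα : ((2 : ℝ) : EReal) ≤ α) : 0 ≤ Pfun x α := by
  by_cases htop : α = ⊤
  · rwa [htop, Pfun_top]
  · have h2 := two_le_toReal_of_ne_top hα htop
    rw [Pfun_of_ne_top hα htop]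
    exact mul_nonneg (by linarith) (div_nonneg hx (by linarith))

end Pfun

lemma tendsto_div_add_nhdsGT_zero (x : ℝ) :
    Tendsto (fun lam : ℝ => x / (x + lam)) (𝓝[>] 0) (𝓝 (x / x)) := by
  rcases eq_or_ne x 0 with rfl | hx
  · simp
  · have hcont : ContinuousAt (fun lam : ℝ => x / (x + lam)) 0 :=
      continuousAt_const.div (continuousAt_const.add continuousAt_id) (by simpa using hx)
    simpa using hcont.tendsto.mono_left nhdsWithin_le_nhds

lemma IsValid1.finsum_div_add_mul_nonneg {f : ℝ → ℝ} (hf : (support f).Finite)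
    (hv : IsValid1 f) {lam : ℝ} (hlam : 0 ≤ lam) : 0 ≤ ∑ᶠ x, x / (x + lam) * f x := by
  rcases hlam.lt_or_eq with hpos | rfl
  · exact hv.2.1 lam hpos
  have hfinset : ∀ lam : ℝ, ∑ᶠ x, x / (x + lam) * f x = ∑ x ∈ hf.toFinset, x / (x + lam) * f x :=
    fun lam => finsum_eq_sum_of_support_subset _ <| by simp
  rw [hfinset]
  simp only [add_zero]
  refine ge_of_tendsto
    (tendsto_finsetSum _ fun x _ => (tendsto_div_add_nhdsGT_zero x).mul_const (f x))
    (eventually_nhdsWithin_of_forall fun lam hlam => ?_)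
  rw [← hfinset]
  exact hv.2.1 lam hlam

lemma prof1_nonneg {f : ℝ → ℝ} (hf : (support f).Finite) (hv : IsValid1 f) {α : EReal}
    (hα : ((2 : ℝ) : EReal) ≤ α) : 0 ≤ prof1 f α := by
  by_cases htop : α = ⊤
  · simpa [prof1, htop, Pfun_top, mul_comm] using hv.2.2
  have h2 := two_le_toReal_of_ne_top hα htop
  have hrow : prof1 f α = (α.toReal - 1) * ∑ᶠ x, x / (x + (α.toReal - 2)) * f x := by
    rw [prof1, mul_finsum]
    exact finsum_congr fun x => by rw [Pfun_of_ne_top hα htop]; ring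
  rw [hrow]
  exact mul_nonneg (by linarith) (hv.finsum_div_add_mul_nonneg hf (by linarith))

lemma prof2_eq_finsum_prof1 {q : ℝ × ℝ → ℝ} (hq : (support q).Finite) (α β : EReal) :
    prof2 q α β = ∑ᶠ y, prof1 (fun x => q (x, y)) α * Pfun y β := by
  have hswap : HasFiniteSupport fun p : ℝ × ℝ => q p.swap * Pfun p.2 α * Pfun p.1 β :=
    (hq.preimage Prod.swap_injective.injOn).subset fun p hp =>
      support_mul_subset_left _ _ (support_mul_subset_left _ _ hp)
  calc prof2 q α β = ∑ᶠ p : ℝ × ℝ, q p.swap * Pfun p.2 α * Pfun p.1 β :=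
        finsum_eq_of_bijective Prod.swap Prod.swap_bijective fun _ => rfl
    _ = ∑ᶠ (y) (x), q (x, y) * Pfun x α * Pfun y β := finsum_curry _ hswap
    _ = _ := finsum_congr fun y => by rw [prof1, finsum_mul]

lemma prof2_nonneg {q : ℝ × ℝ → ℝ} (hq : IsMove2 q) (hv : HorizValid q) {α β : EReal}
    (hα : ((2 : ℝ) : EReal) ≤ α) (hβ : ((2 : ℝ) : EReal) ≤ β) : 0 ≤ prof2 q α β := by
  rw [prof2_eq_finsum_prof1 hq.1]
  refine finsum_nonneg fun y => ?_
  rcases lt_or_ge y 0 with hy | hy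
  · have hrow : ∀ x, q (x, y) = 0 := fun x => hq.2 (x, y) (Or.inr hy)
    simp [prof1, hrow]
  · have hrow : (support fun x => q (x, y)).Finite :=
      hq.1.preimage (Prod.mk_left_injective y).injOn
    exact mul_nonneg (prof1_nonneg hrow (hv y) hα) (Pfun_nonneg hy hβ)

lemma prof2_add {q r : ℝ × ℝ → ℝ} (hq : (support q).Finite) (hr : (support r).Finite)
    (α β : EReal) : prof2 (fun p => q p + r p) α β = prof2 q α β + prof2 r α β := by
  rw [prof2, prof2, prof2, ← finsum_add_distrib
    (hq.subset fun p hp => support_mul_subset_left _ _ (support_mul_subset_left _ _ hp))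
    (hr.subset fun p hp => support_mul_subset_left _ _ (support_mul_subset_left _ _ hp))]
  exact finsum_congr fun p => by ring

lemma prof2_transpose (q : ℝ × ℝ → ℝ) (α β : EReal) :
    prof2 (transpose q) α β = prof2 q β α :=
  finsum_eq_of_bijective Prod.swap Prod.swap_bijective fun p => by
    simp only [transpose, Prod.swap]
    ring

lemma prof2_add_transpose {q : ℝ × ℝ → ℝ} (hq : (support q).Finite) (α β : EReal) :
    prof2 (fun p => q p + transpose q p) α β = prof2 q α β + prof2 q β α := by
  rw [prof2_add (r := transpose q) hq (hq.preimage Prod.swap_injective.injOn), prof2_transpose]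

lemma prof2_tMove (τ : ℝ) {α β : EReal} (hα : ((2 : ℝ) : EReal) ≤ α)
    (hβ : ((2 : ℝ) : EReal) ≤ β) : prof2 (tMove τ) α β = 2 := by
  rw [prof2, finsum_eq_single _ (1, 1)]
  · simp [tMove, pt, Pfun_one hα, Pfun_one hβ]
  rintro ⟨x, y⟩ hne
  rcases eq_or_ne y 0 with rfl | hy
  · simp [Pfun_zero hβ]
  rcases eq_or_ne x 0 with rfl | hx
  · simp [Pfun_zero hα]
  simp [tMove, pt, hne, hx, hy]

theorem stmt_7_general (τ : ℝ)
    (g : ℝ × ℝ → ℝ) (hmove : IsMove2 g) (hval : HorizValid g)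
    (hsum : ∀ p, g p + transpose g p = tMove τ p) :
    ∀ α β : EReal, ((2 : ℝ) : EReal) ≤ α → ((2 : ℝ) : EReal) ≤ β →
      prof2 g α β ≤ 2 := by
  intro α β hα hβ
  have htotal : prof2 g α β + prof2 g β α = 2 := by
    rw [← prof2_add_transpose hmove.1, funext hsum, prof2_tMove τ hα hβ]
  linarith [prof2_nonneg hmove hval hβ hα]

/-- If `g` is horizontally valid and `g + gᵀ = t_τ`, then `ĝ(α,β) ≤ 2` for all
`α, β ∈ [2,∞]`. -/
theorem stmt_7 (τ : ℝ) (hτ : τ ∈ Set.Ioo (0 : ℝ) 1)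
    (g : ℝ × ℝ → ℝ) (hmove : IsMove2 g) (hval : HorizValid g)
    (hsum : ∀ p, g p + transpose g p = tMove τ p) :
    ∀ α β : EReal, ((2 : ℝ) : EReal) ≤ α → ((2 : ℝ) : EReal) ≤ β →
      prof2 g α β ≤ 2 :=
  stmt_7_general τ g hmove hval hsum
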